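/- For every u ≥ 0 and every n ≥ 4u (n a positive integer), φ^n(u) ≤ φ^∞(u), and φ^n(u) → φ^∞(u) as n → ∞, where φ^n(u) = Σ_{k=0}^n (C(n,k) p^n(u)^k (1 - p^n(u))^{n-k})^2 with p^n(u) = (1 - sqrt(1 - 4u/n))/2, and φ^∞(u) = e^{-2u} · Σ_{k=0}^∞ (u^k/k!)^2. -/

import Mathlib

/-- `pⁿ(u) = (1 - √(1 - 4u/n))/2`, a root of `p(1-p) = u/n`. -/
noncomputable def pn (n : ℕ) (u : ℝ) : ℝ := (1 - Real.sqrt (1 - 4 * u / n)) / 2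

/-- `φⁿ(u) = Σ_{k=0}^n (C(n,k) pⁿ(u)ᵏ (1-pⁿ(u))ⁿ⁻ᵏ)²`. -/
noncomputable def phi (n : ℕ) (u : ℝ) : ℝ :=
  ∑ k ∈ Finset.range (n + 1),
    ((n.choose k : ℝ) * pn n u ^ k * (1 - pn n u) ^ (n - k)) ^ 2

/-- `φ^∞(u) = e^{-2u} Σ_k (u^k/k!)²`. -/
noncomputable def phiInf (u : ℝ) : ℝ :=
  Real.exp (-2 * u) * ∑' k : ℕ, (u ^ k / (Nat.factorial k : ℝ)) ^ 2

/-! Sampling `|p e^{iθ} + q|^{2n}` at the `M`-th roots of unity, `M > n`, and using their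
orthogonality gives `M φⁿ(u) = Σ_{j<M} (1 - 2u(1 - cos(2πj/M))/n)ⁿ`, because `pⁿ(1 - pⁿ) = u/n`.
Each summand `(1 - x/n)ⁿ` is nondecreasing in `n`, hence so is `φⁿ(u)`, and it is therefore bounded
by its limit. The limit is taken termwise: the summands of `φⁿ(u)` are squared binomial
probabilities with `n pⁿ(u) → u`, which converge to squared Poisson probabilities, and
`C(n,k) (pⁿ)ᵏ ≤ (n pⁿ)ᵏ/k! ≤ (2u)ᵏ/k!` dominates them. -/

open Finset Filter Topology

namespace IsPrimitiveRoot

variable {K : Type*} [Field K] {ζ : K} {M : ℕ}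

theorem sum_pow_pow_mul_inv_pow_pow (h : IsPrimitiveRoot ζ M) {a b : ℕ} (ha : a < M)
    (hb : b < M) :
    ∑ j ∈ range M, (ζ ^ j) ^ a * ((ζ ^ j)⁻¹) ^ b = if a = b then (M : K) else 0 := by
  have hζ : ζ ≠ 0 := h.ne_zero (by omega)
  have hterm : ∀ j : ℕ, (ζ ^ j) ^ a * ((ζ ^ j)⁻¹) ^ b = (ζ ^ a / ζ ^ b) ^ j := fun j => by
    rw [div_pow, ← pow_mul, ← pow_mul, inv_pow, ← pow_mul, ← pow_mul, mul_comm j, mul_comm j,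
      div_eq_mul_inv]
  simp_rw [hterm]
  split_ifs with hab
  · simp [hab, hζ]
  · have hne : ζ ^ a / ζ ^ b ≠ 1 := by
      rw [Ne, div_eq_one_iff_eq (pow_ne_zero _ hζ)]
      exact fun e => hab (h.pow_inj ha hb e)
    have hpow : (ζ ^ a / ζ ^ b) ^ M = 1 := by
      rw [div_pow, ← pow_mul, ← pow_mul, mul_comm a, mul_comm b, pow_mul, pow_mul, h.pow_eq_one]
      simp
    rw [geom_sum_eq hne, hpow, sub_self, zero_div]

theorem sum_mul_add_mul_inv_add_pow (h : IsPrimitiveRoot ζ M) (x y : K) {n : ℕ} (hn : n < M) :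
    ∑ j ∈ range M, ((x * ζ ^ j + y) * (x * (ζ ^ j)⁻¹ + y)) ^ n
      = M * ∑ k ∈ range (n + 1), ((n.choose k : K) * x ^ k * y ^ (n - k)) ^ 2 := by
  set c : ℕ → K := fun k => (n.choose k : K) * x ^ k * y ^ (n - k)
  have hexpand : ∀ z : K, ((x * z + y) * (x * z⁻¹ + y)) ^ n
      = ∑ a ∈ range (n + 1), ∑ b ∈ range (n + 1), c a * c b * (z ^ a * (z⁻¹) ^ b) := fun z => by
    rw [mul_pow, add_pow, add_pow, sum_mul_sum]
    refine sum_congr rfl fun a _ => sum_congr rfl fun b _ => ?_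
    simp only [c]
    ring
  have hlt : ∀ a ∈ range (n + 1), a < M := fun a ha => (mem_range.1 ha).trans_le hn
  calc ∑ j ∈ range M, ((x * ζ ^ j + y) * (x * (ζ ^ j)⁻¹ + y)) ^ n
      = ∑ a ∈ range (n + 1), ∑ b ∈ range (n + 1),
          c a * c b * ∑ j ∈ range M, (ζ ^ j) ^ a * ((ζ ^ j)⁻¹) ^ b := by
        simp_rw [hexpand, mul_sum]
        rw [sum_comm]
        exact sum_congr rfl fun a _ => sum_comm
    _ = ∑ a ∈ range (n + 1), ∑ b ∈ range (n + 1), c a * c b * if a = b then (M : K) else 0 := by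
        refine sum_congr rfl fun a ha => sum_congr rfl fun b hb => ?_
        rw [h.sum_pow_pow_mul_inv_pow_pow (hlt a ha) (hlt b hb)]
    _ = M * ∑ k ∈ range (n + 1), c k ^ 2 := by
        simp_rw [mul_ite, mul_zero, sum_ite_eq, mul_sum]
        exact sum_congr rfl fun a ha => by simp [ha, sq, mul_comm]

end IsPrimitiveRoot

theorem sum_sq_add_sq_add_mul_cos_pow (p q : ℝ) {n M : ℕ} (hn : n < M) :
    ∑ j ∈ range M, (p ^ 2 + q ^ 2 + 2 * p * q * Real.cos (2 * Real.pi * j / M)) ^ n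
      = M * ∑ k ∈ range (n + 1), ((n.choose k : ℝ) * p ^ k * q ^ (n - k)) ^ 2 := by
  have hζ := Complex.isPrimitiveRoot_exp M (by omega)
  set ζ := Complex.exp (2 * Real.pi * Complex.I / M)
  have hterm : ∀ j : ℕ, ((p ^ 2 + q ^ 2 + 2 * p * q * Real.cos (2 * Real.pi * j / M) : ℝ) : ℂ)
      = (p * ζ ^ j + q) * (p * (ζ ^ j)⁻¹ + q) := fun j => by
    set θ : ℂ := j * (2 * Real.pi * Complex.I / M)
    have h2cos : 2 * Complex.cos (2 * Real.pi * j / M) = Complex.exp θ + Complex.exp (-θ) := by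
      rw [Complex.two_cos, show (2 * Real.pi * j / M : ℂ) * Complex.I = θ by ring,
        show -(2 * Real.pi * j / M : ℂ) * Complex.I = -θ by ring]
    have hinv : Complex.exp θ * Complex.exp (-θ) = 1 := by
      rw [← Complex.exp_add, add_neg_cancel, Complex.exp_zero]
    rw [← Complex.exp_nat_mul, ← Complex.exp_neg]
    push_cast
    linear_combination (p * q : ℂ) * h2cos - (p : ℂ) ^ 2 * hinv
  have := hζ.sum_mul_add_mul_inv_add_pow (p : ℂ) q hn
  simp_rw [← hterm] at this
  exact_mod_cast this

/-- Bernoulli's inequality with exponent `m / n` gives `1 - x / n ≤ (1 - x / m) ^ (m / n)`. -/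
theorem one_sub_div_pow_le_one_sub_div_pow {x : ℝ} {n m : ℕ} (hn : 0 < n) (hnm : n ≤ m)
    (hx : x ≤ n) : (1 - x / n) ^ n ≤ (1 - x / m) ^ m := by
  have hn' : (0 : ℝ) < n := by exact_mod_cast hn
  have hnm' : (n : ℝ) ≤ m := by exact_mod_cast hnm
  have hm' : (0 : ℝ) < m := hn'.trans_le hnm'
  have hbernoulli : 1 - x / n ≤ (1 - x / m) ^ ((m : ℝ) / n) := by
    have := one_add_mul_self_le_rpow_one_add (s := -x / m) (p := m / n)
      (by rw [neg_div, neg_le_neg_iff, div_le_one hm']; exact hx.trans hnm')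
      (by rwa [one_le_div hn'])
    convert this using 1
    · field_simp
      ring
    · ring_nf
  calc (1 - x / n) ^ n ≤ ((1 - x / m) ^ ((m : ℝ) / n)) ^ n :=
        pow_le_pow_left₀ (by rw [sub_nonneg, div_le_one hn']; exact hx) hbernoulli n
    _ = (1 - x / m) ^ m := by
        rw [← Real.rpow_natCast _ n, ← Real.rpow_mul
          (by rw [sub_nonneg, div_le_one hm']; exact hx.trans hnm'), div_mul_cancel₀ _ hn'.ne',
          Real.rpow_natCast]

section pn

variable {n : ℕ} {u : ℝ}

theorem pn_le_half : pn n u ≤ 1 / 2 := by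
  have := Real.sqrt_nonneg (1 - 4 * u / n)
  rw [pn]
  linarith

theorem pn_nonneg (hu : 0 ≤ u) : 0 ≤ pn n u := by
  have hratio : 0 ≤ 4 * u / n := by positivity
  have : Real.sqrt (1 - 4 * u / n) ≤ 1 := Real.sqrt_le_one.2 (by linarith)
  rw [pn]
  linarith

theorem pn_mul_one_sub_pn (hn : 0 < n) (h4 : 4 * u ≤ n) : pn n u * (1 - pn n u) = u / n := by
  have hn' : (0 : ℝ) < n := by exact_mod_cast hn
  have hsq : Real.sqrt (1 - 4 * u / n) ^ 2 = 1 - 4 * u / n :=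
    Real.sq_sqrt (by rw [sub_nonneg, div_le_one hn']; exact h4)
  rw [pn]
  linear_combination (-1 / 4 : ℝ) * hsq

theorem natCast_mul_pn_le (hu : 0 ≤ u) (hn : 0 < n) (h4 : 4 * u ≤ n) : n * pn n u ≤ 2 * u := by
  have hn' : (0 : ℝ) < n := by exact_mod_cast hn
  have hmul : n * pn n u * (1 - pn n u) = u := by
    rw [mul_assoc, pn_mul_one_sub_pn hn h4, mul_div_cancel₀ _ hn'.ne']
  nlinarith [pn_le_half (n := n) (u := u), pn_nonneg (n := n) hu]

/-- Rationalising, `n pⁿ(u) = 2u / (1 + √(1 - 4u/n))`. -/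
theorem tendsto_natCast_mul_pn (u : ℝ) : Tendsto (fun n : ℕ => n * pn n u) atTop (𝓝 u) := by
  have hratio : Tendsto (fun n : ℕ => 4 * u / n) atTop (𝓝 0) :=
    tendsto_const_nhds.div_atTop tendsto_natCast_atTop_atTop
  have hsqrt : Tendsto (fun n : ℕ => Real.sqrt (1 - 4 * u / n)) atTop (𝓝 1) := by
    have := (Real.continuous_sqrt.tendsto _).comp (hratio.const_sub 1)
    simpa [Function.comp_def] using this
  have hlim : Tendsto (fun n : ℕ => 2 * u / (1 + Real.sqrt (1 - 4 * u / n))) atTop (𝓝 u) := by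
    have := tendsto_const_nhds (x := 2 * u) |>.div (hsqrt.const_add 1) (by norm_num)
    rwa [show 2 * u / (1 + 1) = u by ring] at this
  refine hlim.congr' ?_
  filter_upwards [eventually_gt_atTop 0,
    tendsto_natCast_atTop_atTop.eventually_ge_atTop (4 * u)] with n hn h4
  have hn' : (0 : ℝ) < n := by exact_mod_cast hn
  have hsq : Real.sqrt (1 - 4 * u / n) ^ 2 = 1 - 4 * u / n :=
    Real.sq_sqrt (by rw [sub_nonneg, div_le_one hn']; exact h4)
  have hpos : 0 < 1 + Real.sqrt (1 - 4 * u / n) := by positivity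
  have hcancel : (n : ℝ) * (4 * u / n) = 4 * u := mul_div_cancel₀ _ hn'.ne'
  rw [pn, div_eq_iff hpos.ne']
  linear_combination (n / 2 : ℝ) * hsq - (1 / 2 : ℝ) * hcancel

end pn

theorem natCast_mul_phi_eq_sum_cos {n M : ℕ} {u : ℝ} (hn : 0 < n) (h4 : 4 * u ≤ n) (hM : n < M) :
    M * phi n u = ∑ j ∈ range M, (1 - 2 * u * (1 - Real.cos (2 * Real.pi * j / M)) / n) ^ n := by
  rw [phi, ← sum_sq_add_sq_add_mul_cos_pow _ _ hM]
  refine sum_congr rfl fun j _ => ?_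
  congr 1
  linear_combination (-2 * (1 - Real.cos (2 * Real.pi * j / M))) * pn_mul_one_sub_pn hn h4

theorem phi_le_phi_of_le {n m : ℕ} {u : ℝ} (hu : 0 ≤ u) (hn : 0 < n) (h4 : 4 * u ≤ n)
    (hnm : n ≤ m) : phi n u ≤ phi m u := by
  have h4m : 4 * u ≤ m := h4.trans (by exact_mod_cast hnm)
  rw [← mul_le_mul_iff_right₀ (by positivity : (0 : ℝ) < (m + 1 : ℕ)),
    natCast_mul_phi_eq_sum_cos hn h4 (by omega),
    natCast_mul_phi_eq_sum_cos (hn.trans_le hnm) h4m (by omega)]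
  refine sum_le_sum fun j _ => one_sub_div_pow_le_one_sub_div_pow hn hnm ?_
  nlinarith [Real.neg_one_le_cos (2 * Real.pi * j / (m + 1 : ℕ))]

theorem phi_eq_tsum (n : ℕ) (u : ℝ) :
    phi n u = ∑' k, ((n.choose k : ℝ) * pn n u ^ k * (1 - pn n u) ^ (n - k)) ^ 2 := by
  rw [phi, tsum_eq_sum]
  intro k hk
  simp [Nat.choose_eq_zero_of_lt (by simpa using hk : n < k)]

theorem choose_mul_pow_mul_one_sub_pow_le {p : ℝ} (hp₀ : 0 ≤ p) (hp₁ : p ≤ 1) (n k : ℕ) :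
    (n.choose k : ℝ) * p ^ k * (1 - p) ^ (n - k) ≤ (n * p) ^ k / k.factorial :=
  calc (n.choose k : ℝ) * p ^ k * (1 - p) ^ (n - k) ≤ (n.choose k : ℝ) * p ^ k := by
        have : (1 - p) ^ (n - k) ≤ 1 := pow_le_one₀ (by linarith) (by linarith)
        exact mul_le_of_le_one_right (by positivity) this
    _ ≤ (n : ℝ) ^ k / k.factorial * p ^ k := by gcongr; exact Nat.choose_le_pow_div k n
    _ = (n * p) ^ k / k.factorial := by ring

theorem summable_sq_pow_div_factorial (x : ℝ) :
    Summable fun k : ℕ => (x ^ k / k.factorial) ^ 2 := by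
  refine .of_nonneg_of_le (fun k => sq_nonneg _) (fun k => ?_)
    (Real.summable_pow_div_factorial (x ^ 2))
  have hfact : (1 : ℝ) ≤ k.factorial := by exact_mod_cast k.factorial_pos
  rw [div_pow, ← pow_mul, mul_comm, pow_mul]
  exact div_le_div_of_nonneg_left (by positivity) (by positivity) (by nlinarith)

theorem tsum_sq_exp_neg_mul_pow_div_factorial_eq_phiInf (u : ℝ) :
    ∑' k : ℕ, (Real.exp (-u) * u ^ k / k.factorial) ^ 2 = phiInf u := by
  rw [phiInf, ← tsum_mul_left]
  refine tsum_congr fun k => ?_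
  rw [show -2 * u = -u + -u by ring, Real.exp_add]
  ring

theorem tendsto_phi_phiInf {u : ℝ} (hu : 0 ≤ u) :
    Tendsto (fun n : ℕ => phi n u) atTop (𝓝 (phiInf u)) := by
  have hlim (k : ℕ) := (ProbabilityTheory.tendsto_choose_mul_pow_of_tendsto_mul_atTop k
    (tendsto_natCast_mul_pn u)).pow 2
  have hbound : ∀ᶠ n : ℕ in atTop, ∀ k,
      ‖((n.choose k : ℝ) * pn n u ^ k * (1 - pn n u) ^ (n - k)) ^ 2‖
        ≤ ((2 * u) ^ k / k.factorial) ^ 2 := by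
    filter_upwards [eventually_gt_atTop 0,
      tendsto_natCast_atTop_atTop.eventually_ge_atTop (4 * u)] with n hn h4 k
    have hp₀ : 0 ≤ pn n u := pn_nonneg hu
    have hp₁ : pn n u ≤ 1 := pn_le_half.trans (by norm_num)
    have hq₀ : 0 ≤ 1 - pn n u := by linarith
    rw [Real.norm_of_nonneg (sq_nonneg _)]
    refine pow_le_pow_left₀ (by positivity) ?_ 2
    refine (choose_mul_pow_mul_one_sub_pow_le hp₀ hp₁ n k).trans ?_
    exact div_le_div_of_nonneg_right
      (pow_le_pow_left₀ (by positivity) (natCast_mul_pn_le hu hn h4) k) (by positivity)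
  simpa only [← phi_eq_tsum, tsum_sq_exp_neg_mul_pow_div_factorial_eq_phiInf] using
    tendsto_tsum_of_dominated_convergence (summable_sq_pow_div_factorial (2 * u)) hlim hbound

theorem phi_le_and_tendsto_phiInf (u : ℝ) (hu : 0 ≤ u) :
    (∀ n : ℕ, 0 < n → 4 * u ≤ (n : ℝ) → phi n u ≤ phiInf u) ∧
    Filter.Tendsto (fun n : ℕ => phi n u) Filter.atTop (nhds (phiInf u)) := by
  refine ⟨fun n hn h4 => ge_of_tendsto (tendsto_phi_phiInf hu) ?_, tendsto_phi_phiInf hu⟩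
  filter_upwards [eventually_ge_atTop n] with m hm
  exact phi_le_phi_of_le hu hn h4 hm
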